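/- The map Υ from naive EGK data of length n to EGK data of length n is surjective: for every EGK datum G = (n₁,…,n_r; m₁,…,m_r; ζ₁,…,ζ_r) of length n there exists a naive EGK datum H of length n with Υ(H) = G. -/

import Mathlib

open Matrix
open scoped Classical

noncomputable section

/-- The data of a normalized additive discrete valuation `ord` on a field `F`
(`ord ϖ = 1` for a prime element `ϖ`, `ord 0 = ∞`), together with the axioms making `F`
a non-archimedean local field: `ord` is a surjective discrete valuation, the residue
field is finite, and `F` is complete. -/
structure LocalFieldData (F : Type*) [Field F] where
  ord : F → WithTop ℤ
  ord_zero : ord 0 = ⊤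
  ord_eq_top : ∀ x : F, ord x = ⊤ → x = 0
  ord_one : ord 1 = 0
  ord_neg : ∀ x : F, ord (-x) = ord x
  ord_mul : ∀ x y : F, ord (x * y) = ord x + ord y
  ord_add : ∀ x y : F, min (ord x) (ord y) ≤ ord (x + y)
  ord_surj : ∀ m : ℤ, ∃ x : F, ord x = (m : WithTop ℤ)
  residue_finite : ∃ S : Finset F, ∀ x : F, 0 ≤ ord x → ∃ s ∈ S, 0 < ord (x - s)
  complete : ∀ f : ℕ → F,
    (∀ N : ℤ, ∃ M : ℕ, ∀ m ≥ M, ∀ k ≥ M, (N : WithTop ℤ) ≤ ord (f m - f k)) →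
    ∃ L : F, ∀ N : ℤ, ∃ M : ℕ, ∀ m ≥ M, (N : WithTop ℤ) ≤ ord (f m - L)

/-- The (non-strict) lexicographic order on sequences: `y ⪯ z`. -/
def lexLE {n : ℕ} (y z : Fin n → ℤ) : Prop :=
  y = z ∨ ∃ j : Fin n, y j < z j ∧ ∀ i : Fin n, i < j → y i = z i

/-- `d` is a square in `F`. -/
def IsSq {F : Type*} [Field F] (d : F) : Prop := ∃ y : F, y ^ 2 = d

/-- `D_B = (-4)^{⌊n/2⌋} · det B`. -/
def DB {F : Type*} [Field F] {n : ℕ} (B : Matrix (Fin n) (Fin n) F) : F :=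
  (-4 : F) ^ (n / 2) * B.det

/-- The upper-left `m × m` submatrix `B^{(m)}` (junk entries `0` out of range). -/
def upperLeft {α : Type*} [Zero α] {n : ℕ} (B : Matrix (Fin n) (Fin n) α) (m : ℕ) :
    Matrix (Fin m) (Fin m) α :=
  Matrix.of fun i j =>
    if h : (i : ℕ) < n ∧ (j : ℕ) < n then B ⟨(i : ℕ), h.1⟩ ⟨(j : ℕ), h.2⟩ else 0

/-- The first `m` entries of a sequence (junk value `0` out of range). -/
def restrictSeq {n : ℕ} (a : Fin n → ℤ) (m : ℕ) : Fin m → ℤ :=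
  fun i => if h : (i : ℕ) < n then a ⟨(i : ℕ), h⟩ else 0

/-- An `a`-admissible involution `σ` (Definition 1.6). -/
def Admissible {n : ℕ} (a : Fin n → ℤ) (σ : Equiv.Perm (Fin n)) : Prop :=
  (∀ i, σ (σ i) = i) ∧
  -- (i) 𝒫⁰ has at most two elements
  (∀ i j k : Fin n, σ i = i → σ j = j → σ k = k → i = j ∨ i = k ∨ j = k) ∧
  -- (i) two distinct fixed points have different parities of `a`
  (∀ i j : Fin n, σ i = i → σ j = j → i ≠ j → ¬ (a i % 2 = a j % 2)) ∧
  -- (i) a fixed point is maximal in its block and maximal among `𝒫⁰ ∪ 𝒫⁺` of the same parity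
  (∀ i : Fin n, σ i = i →
    (∀ j : Fin n, a j = a i → j ≤ i) ∧
    ∀ j : Fin n, (σ j = j ∨ a (σ j) < a j) → a j % 2 = a i % 2 → j ≤ i) ∧
  -- (ii) at most one element of `I_s ∩ 𝒫⁻`
  (∀ i j : Fin n, a i = a j → a i < a (σ i) → a j < a (σ j) → i = j) ∧
  -- (ii) an element of `I_s ∩ 𝒫⁻` is maximal in `I_s` and is paired with the minimum
  (∀ i : Fin n, a i < a (σ i) →
    (∀ j : Fin n, a j = a i → j ≤ i) ∧
    IsLeast {j : Fin n | a (σ j) < a j ∧ i < j ∧ a j % 2 = a i % 2} (σ i)) ∧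
  -- (iii) at most one element of `I_s ∩ 𝒫⁺`
  (∀ i j : Fin n, a i = a j → a (σ i) < a i → a (σ j) < a j → i = j) ∧
  -- (iii) an element of `I_s ∩ 𝒫⁺` is minimal in `I_s` and is paired with the maximum
  (∀ i : Fin n, a (σ i) < a i →
    (∀ j : Fin n, a j = a i → i ≤ j) ∧
    IsGreatest {j : Fin n | a j < a (σ j) ∧ j < i ∧ a j % 2 = a i % 2} (σ i)) ∧
  -- (iv)
  (∀ i : Fin n, a i = a (σ i) → (((i : ℕ) : ℤ) - ((σ i : Fin n) : ℕ)).natAbs ≤ 1)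

/-- The combinatorial data of a decomposition of an `n × n` matrix into `r` consecutive
diagonal blocks, each of size `1` or `2`, the `s`-th block being scaled by `2^(k s)`:
`c` is the sequence of cumulative block boundaries. -/
structure BlockData (n : ℕ) where
  r : ℕ
  c : ℕ → ℕ
  k : ℕ → ℕ
  c_zero : c 0 = 0
  c_last : c r = n
  c_lt : ∀ s < r, c s < c (s + 1)
  size_le : ∀ s < r, c (s + 1) ≤ c s + 2

namespace BlockData

variable {n : ℕ} (bd : BlockData n)

/-- `i` belongs to the `s`-th block. -/
def InBlock (s : ℕ) (i : Fin n) : Prop := bd.c s ≤ (i : ℕ) ∧ (i : ℕ) < bd.c (s + 1)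

/-- The size (`deg C_s`) of the `s`-th block. -/
def size (s : ℕ) : ℕ := bd.c (s + 1) - bd.c s

end BlockData

/-- The description of the maximal constant blocks of a non-decreasing sequence `a`:
`Ns` is the sequence of cumulative block lengths `n_s^*` and `ms` the sequence of values. -/
def BlocksOf {n : ℕ} (a : Fin n → ℤ) (r : ℕ) (Ns : ℕ → ℕ) (ms : ℕ → ℤ) : Prop :=
  Ns 0 = 0 ∧ Ns r = n ∧ (∀ s < r, Ns s < Ns (s + 1)) ∧
  (∀ s < r, ∀ i : Fin n, Ns s ≤ (i : ℕ) → (i : ℕ) < Ns (s + 1) → a i = ms s) ∧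
  (∀ s, s + 1 < r → ms s < ms (s + 1))

/-- `(n₁,…,n_r; m₁,…,m_r; ζ₁,…,ζ_r)` (encoded via the cumulative sums `Ns (s+1) = n_{s+1}^*`,
`ms s = m_{s+1}`, `zs s = ζ_{s+1}`) is an EGK datum of length `n` (Definition 4.2). -/
def IsEGKDatum (n r : ℕ) (Ns : ℕ → ℕ) (ms zs : ℕ → ℤ) : Prop :=
  Ns 0 = 0 ∧ Ns r = n ∧ (∀ s < r, Ns s < Ns (s + 1)) ∧
  (∀ s < r, 0 ≤ ms s) ∧ (∀ s, s + 1 < r → ms s < ms (s + 1)) ∧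
  (∀ s < r, zs s = 0 ∨ zs s = 1 ∨ zs s = -1) ∧
  -- (E2)
  (∀ s < r, Even (Ns (s + 1)) →
    (zs s ≠ 0 ↔ Even (∑ u ∈ Finset.range (s + 1), ms u * ((Ns (u + 1) : ℤ) - (Ns u : ℤ))))) ∧
  -- (E3)
  (∀ s < r, ¬ Even (Ns (s + 1)) →
    zs s ≠ 0 ∧
    ((∀ i < s, Even (Ns (i + 1))) →
      zs s = ∏ u ∈ Finset.range s, zs u ^ (ms u + ms (u + 1)).toNat) ∧
    (∀ t < s, ¬ Even (Ns (t + 1)) → (∀ i, t < i → i < s → Even (Ns (i + 1))) →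
      Even ((∑ u ∈ Finset.range s, ms u * ((Ns (u + 1) : ℤ) - (Ns u : ℤ))) +
        ms s * ((Ns (s + 1) : ℤ) - (Ns s : ℤ) - 1)) →
      zs s = zs t * ∏ u ∈ Finset.Ico (t + 1) s, zs u ^ (ms u + ms (u + 1)).toNat))

/-- `(a₁,…,a_n; ε₁,…,ε_n)` is a naive EGK datum of length `n` (Definition 4.1);
the index `i : Fin n` corresponds to the (1-based) index `(i : ℕ) + 1` of the paper. -/
def IsNaiveEGK (n : ℕ) (a ε : Fin n → ℤ) : Prop :=
  (∀ i, 0 ≤ a i) ∧ (∀ i j : Fin n, i ≤ j → a i ≤ a j) ∧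
  (∀ i, ε i = 0 ∨ ε i = 1 ∨ ε i = -1) ∧
  -- (N2)
  (∀ i : Fin n, Even ((i : ℕ) + 1) →
    (ε i ≠ 0 ↔ Even (∑ j ∈ Finset.univ.filter (fun j : Fin n => j ≤ i), a j))) ∧
  -- (N3)
  (∀ i : Fin n, ¬ Even ((i : ℕ) + 1) → ε i ≠ 0) ∧
  -- (N4)
  (∀ h : 0 < n, ε ⟨0, h⟩ = 1) ∧
  -- (N5)
  (∀ i : Fin n, 2 ≤ (i : ℕ) → ¬ Even ((i : ℕ) + 1) →
    Even (∑ j ∈ Finset.univ.filter (fun j : Fin n => j < i), a j) →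
    ∀ (h2 : (i : ℕ) - 2 < n) (h1 : (i : ℕ) - 1 < n),
      ε i = ε ⟨(i : ℕ) - 2, h2⟩ * ε ⟨(i : ℕ) - 1, h1⟩ ^ (a i + a ⟨(i : ℕ) - 1, h1⟩).toNat)

/-- `Υ(a₁,…,a_n; ε₁,…,ε_n) = (n₁,…,n_r; m₁,…,m_r; ζ₁,…,ζ_r)` (encoded via cumulative
block lengths `Ns`). -/
def UpsilonRel (n : ℕ) (a ε : Fin n → ℤ) (r : ℕ) (Ns : ℕ → ℕ) (ms zs : ℕ → ℤ) : Prop :=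
  BlocksOf a r Ns ms ∧
  (∀ s < r, ∀ h : Ns (s + 1) - 1 < n, zs s = ε ⟨Ns (s + 1) - 1, h⟩)

/-- The Hilbert symbol `⟨a, b⟩ ∈ {±1}`. -/
def hilbertSym {F : Type*} [Field F] (a b : F) : ℤ :=
  if ∃ x y : F, a * x ^ 2 + b * y ^ 2 = 1 then 1 else -1

/-- `e` is the Clifford invariant `η_B` of `B` (Definition 1.4), computed via a
`GL_n(F)`-diagonalization of `B`. -/
def IsCliffordInv {F : Type*} [Field F] {n : ℕ} (B : Matrix (Fin n) (Fin n) F) (e : ℤ) :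
    Prop :=
  ∃ (P : Matrix (Fin n) (Fin n) F) (d : Fin n → F),
    IsUnit P.det ∧ Pᵀ * B * P = Matrix.diagonal d ∧
    e = hilbertSym (-1) (-1 : F) ^ ((n + 1) / 4) * hilbertSym (-1) B.det ^ ((n - 1) / 2) *
      ∏ j : Fin n, ∏ i ∈ Finset.univ.filter (fun i : Fin n => i < j), hilbertSym (d i) (d j)

namespace LocalFieldData

variable {F : Type*} [Field F] (v : LocalFieldData F)

/-- `x` lies in the ring of integers `𝔬`. -/
def Integer (x : F) : Prop := 0 ≤ v.ord x

/-- `ord` as an integer-valued function (junk value `0` at `x = 0`). -/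
def ordZ (x : F) : ℤ := (v.ord x).untopD 0

/-- `U ∈ GL_n(𝔬)`. -/
def IsUnimodular {n : ℕ} (U : Matrix (Fin n) (Fin n) F) : Prop :=
  (∀ i j, v.Integer (U i j)) ∧ v.ord U.det = 0

/-- `B` and `B'` are `GL_n(𝔬)`-equivalent. -/
def Equivalent {n : ℕ} (B B' : Matrix (Fin n) (Fin n) F) : Prop :=
  ∃ U : Matrix (Fin n) (Fin n) F, v.IsUnimodular U ∧ B' = Uᵀ * B * U

/-- `B ∈ ℋ_n(𝔬)`: a half-integral symmetric matrix. -/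
def IsHalfIntegral {n : ℕ} (B : Matrix (Fin n) (Fin n) F) : Prop :=
  B.IsSymm ∧ (∀ i, v.Integer (B i i)) ∧ ∀ i j, v.Integer (2 * B i j)

/-- `B ∈ 𝓜(a)`: `ord(b_ii) ≥ a_i` and `ord(2 b_ij) ≥ (a_i + a_j)/2`. -/
def MemM {n : ℕ} (B : Matrix (Fin n) (Fin n) F) (a : Fin n → ℤ) : Prop :=
  (∀ i, (a i : WithTop ℤ) ≤ v.ord (B i i)) ∧
  ∀ i j, ((a i + a j : ℤ) : WithTop ℤ) ≤ v.ord (2 * B i j) + v.ord (2 * B i j)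

/-- `a ∈ S(B)`. -/
def MemS {n : ℕ} (B : Matrix (Fin n) (Fin n) F) (a : Fin n → ℤ) : Prop :=
  (∀ i, 0 ≤ a i) ∧ (∀ i j : Fin n, i ≤ j → a i ≤ a j) ∧ v.MemM B a

/-- `a ∈ 𝐒({B})`. -/
def MemSS {n : ℕ} (B : Matrix (Fin n) (Fin n) F) (a : Fin n → ℤ) : Prop :=
  ∃ U : Matrix (Fin n) (Fin n) F, v.IsUnimodular U ∧ v.MemS (Uᵀ * B * U) a

/-- `a` is the Gross–Keating invariant of `B`: the greatest element of `𝐒({B})` in the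
lexicographic order. -/
def IsGK {n : ℕ} (B : Matrix (Fin n) (Fin n) F) (a : Fin n → ℤ) : Prop :=
  v.MemSS B a ∧ ∀ b : Fin n → ℤ, v.MemSS B b → lexLE b a

/-- `B` is optimal: `GK(B) ∈ S(B)`. -/
def IsOptimal {n : ℕ} (B : Matrix (Fin n) (Fin n) F) : Prop :=
  ∃ a : Fin n → ℤ, v.IsGK B a ∧ v.MemS B a

/-- Membership condition for the group `G_a`:
`ord(g_ij) ≥ (a_j - a_i)/2` whenever `a_i < a_j`. -/
def GCond {n : ℕ} (a : Fin n → ℤ) (g : Matrix (Fin n) (Fin n) F) : Prop :=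
  ∀ i j : Fin n, a i < a j → ((a j - a i : ℤ) : WithTop ℤ) ≤ v.ord (g i j) + v.ord (g i j)

/-- `F(√d)/F` is a quadratic unramified extension, characterized via local class field
theory: `d` is not a square, and every unit of `𝔬` is a norm from `F(√d)`. -/
def UnramifiedQuadratic (d : F) : Prop :=
  ¬ IsSq d ∧ ∀ x : F, v.ord x = 0 → ∃ a b : F, x = a ^ 2 - d * b ^ 2

/-- `ξ_B ∈ {1, -1, 0}` according as `D_B` is a square, `F(√D_B)/F` is unramified quadratic,
or `F(√D_B)/F` is ramified. -/
def xi {n : ℕ} (B : Matrix (Fin n) (Fin n) F) : ℤ :=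
  if IsSq (DB B) then 1 else if v.UnramifiedQuadratic (DB B) then -1 else 0

/-- `ord 𝔇` for the quadratic extension `F(√d)/F`: the minimal valuation of the
discriminant `4 y² d` of an integral generator `x + y √d` of `F[√d]`. -/
def discOrd (d : F) : ℤ :=
  sInf {m : ℤ | ∃ x y : F, v.Integer (2 * x) ∧ v.Integer (x ^ 2 - d * y ^ 2) ∧
    v.ord (4 * y ^ 2 * d) = (m : WithTop ℤ)}

/-- `Δ(B)` (Definition 1.3). -/
def Delta {n : ℕ} (B : Matrix (Fin n) (Fin n) F) : ℤ :=
  if Even n then v.ordZ (DB B) - v.discOrd (DB B) + 1 - (v.xi B) ^ 2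
  else v.ordZ (DB B)

/-- `B` is a reduced form of GK-type `(a, σ)` (Definition 1.8). -/
def IsReducedForm {n : ℕ} (B : Matrix (Fin n) (Fin n) F) (a : Fin n → ℤ)
    (σ : Equiv.Perm (Fin n)) : Prop :=
  v.MemM B a ∧
  -- (1)
  (∀ i : Fin n, σ i ≠ i →
    v.ord (2 * B i (σ i)) + v.ord (2 * B i (σ i)) = ((a i + a (σ i) : ℤ) : WithTop ℤ)) ∧
  (∀ i : Fin n, a i < a (σ i) → v.ord (B i i) = (a i : WithTop ℤ)) ∧
  -- (2)
  (∀ i : Fin n, σ i = i → v.ord (B i i) = (a i : WithTop ℤ)) ∧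
  -- (3)
  (∀ i j : Fin n, j ≠ i → j ≠ σ i →
    ((a i + a j : ℤ) : WithTop ℤ) < v.ord (2 * B i j) + v.ord (2 * B i j))

/-- The `s`-th block of `B` is `2^{k_s} C_s` with `C_s` a unimodular diagonal matrix. -/
def DiagBlock {n : ℕ} (B : Matrix (Fin n) (Fin n) F) (bd : BlockData n) (s : ℕ) : Prop :=
  ∀ i j : Fin n, bd.InBlock s i → bd.InBlock s j →
    (i = j → v.ord (B i i) = ((bd.k s : ℤ) : WithTop ℤ)) ∧ (i ≠ j → B i j = 0)

/-- The `s`-th block of `B` is `2^{k_s} C_s` with `C_s ∈ ½(S₂(𝔬)_e ∩ GL₂(𝔬))`. -/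
def EvenBlock {n : ℕ} (B : Matrix (Fin n) (Fin n) F) (bd : BlockData n) (s : ℕ) : Prop :=
  bd.c (s + 1) = bd.c s + 2 ∧
  ∀ i j : Fin n, bd.InBlock s i → bd.InBlock s j →
    (i = j → ((bd.k s : ℤ) : WithTop ℤ) ≤ v.ord (B i i)) ∧
    (i ≠ j → v.ord (2 * B i j) = ((bd.k s : ℤ) : WithTop ℤ))

/-- `B = 2^{k₁}C₁ ⊥ ⋯ ⊥ 2^{k_r}C_r` is a pre-optimal form (Definition 2.2), with the
block decomposition recorded by `bd`. -/
def IsPreOptimal {n : ℕ} (B : Matrix (Fin n) (Fin n) F) (bd : BlockData n) : Prop :=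
  v.IsHalfIntegral B ∧ B.det ≠ 0 ∧
  (∀ s t : ℕ, s < bd.r → t < bd.r → s ≠ t →
    ∀ i j : Fin n, bd.InBlock s i → bd.InBlock t j → B i j = 0) ∧
  (∀ s < bd.r, v.DiagBlock B bd s ∨ v.EvenBlock B bd s) ∧
  -- (PO1): `Σ_{j ∈ 𝒟_m} deg C_j ≤ 2`
  (∀ s t : ℕ, s < bd.r → t < bd.r → s ≠ t → v.DiagBlock B bd s → v.DiagBlock B bd t →
    bd.k s = bd.k t → bd.size s + bd.size t ≤ 2) ∧
  (∀ s t u : ℕ, s < bd.r → t < bd.r → u < bd.r → s ≠ t → s ≠ u → t ≠ u →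
    v.DiagBlock B bd s → v.DiagBlock B bd t → v.DiagBlock B bd u →
    bd.k s = bd.k t → bd.k t = bd.k u → False) ∧
  -- (PO1): `ℰ_m` is a set of consecutive integers
  (∀ s t u : ℕ, s ≤ t → t ≤ u → u < bd.r → v.EvenBlock B bd s → v.EvenBlock B bd u →
    bd.k s = bd.k u → v.EvenBlock B bd t ∧ bd.k t = bd.k s) ∧
  -- (PO2)
  (∀ s t : ℕ, s < t → t < bd.r →
    (v.DiagBlock B bd s → v.DiagBlock B bd t → bd.k s ≤ bd.k t) ∧
    (v.EvenBlock B bd s → v.EvenBlock B bd t → bd.k s ≤ bd.k t) ∧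
    (v.DiagBlock B bd s → v.EvenBlock B bd t → bd.k s + 1 ≤ bd.k t) ∧
    (v.EvenBlock B bd s → v.DiagBlock B bd t → bd.k s ≤ bd.k t + 1)) ∧
  -- (PO3)
  (∀ s < bd.r, v.DiagBlock B bd s → bd.size s = 2 →
    1 ≤ s ∧
    ((Even (bd.c (s + 1)) ∧ v.xi (upperLeft B (bd.c s)) = 0 ∧
        v.xi (upperLeft B (bd.c (s + 1))) = 0) ∨
      (Odd (bd.c s) ∧ Even (v.ordZ (Matrix.det (upperLeft B (bd.c s))) + (bd.k s : ℤ))))) ∧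
  -- (PO4)
  (∀ s < bd.r, 1 ≤ s → bd.k (s - 1) = bd.k s + 1 → v.DiagBlock B bd s →
    v.EvenBlock B bd (s - 1) →
    bd.size s = 2 ∨
      (bd.size s = 1 ∧
        ((Even (bd.c (s + 1)) ∧ Even (v.ordZ (Matrix.det (upperLeft B (bd.c (s + 1)))))) ∨
          (Odd (bd.c (s + 1)) ∧ v.xi (upperLeft B (bd.c s)) = 0)))) ∧
  -- (PO5)
  (∀ s : ℕ, s + 1 < bd.r → v.DiagBlock B bd s → v.EvenBlock B bd (s + 1) →
    bd.k (s + 1) = bd.k s + 1 →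
    bd.size s = 1 ∧
      ((Even (bd.c (s + 1)) ∧ Odd (v.ordZ (Matrix.det (upperLeft B (bd.c (s + 1)))))) ∨
        (Odd (bd.c (s + 1)) ∧ (1 ≤ s → v.xi (upperLeft B (bd.c s)) ≠ 0)))) ∧
  -- (PO6)
  (∀ s : ℕ, s + 1 < bd.r → Even (bd.c (s + 1)) → v.DiagBlock B bd s →
    v.DiagBlock B bd (s + 1) → bd.k (s + 1) = bd.k s + 1 →
    v.xi (upperLeft B (bd.c (s + 1))) = 0)

/-- The statement of Theorem 3.1 at the `s`-th block of a pre-optimal form `B`, for the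
(0-indexed) sequence `aN` of entries of `GK(B)`. -/
def GKFormulaAt {n : ℕ} (B : Matrix (Fin n) (Fin n) F) (bd : BlockData n)
    (aN : ℕ → ℤ) (s : ℕ) : Prop :=
  -- (1)
  (v.EvenBlock B bd s →
    aN (bd.c (s + 1) - 2) = (bd.k s : ℤ) ∧ aN (bd.c (s + 1) - 1) = (bd.k s : ℤ)) ∧
  -- (2)
  (v.DiagBlock B bd s → bd.size s = 1 →
    -- (2.1)
    (Odd (bd.c (s + 1)) →
      (Odd (v.ordZ (Matrix.det (upperLeft B (bd.c s)))) →
        aN (bd.c (s + 1) - 1) = (bd.k s : ℤ) + 2) ∧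
      (Even (v.ordZ (Matrix.det (upperLeft B (bd.c s)))) → v.xi (upperLeft B (bd.c s)) = 0 →
        aN (bd.c (s + 1) - 1) = (bd.k s : ℤ) + 1) ∧
      (v.xi (upperLeft B (bd.c s)) ≠ 0 → aN (bd.c (s + 1) - 1) = (bd.k s : ℤ))) ∧
    -- (2.2)
    (Even (bd.c (s + 1)) →
      (Odd (v.ordZ (Matrix.det (upperLeft B (bd.c (s + 1))))) →
        aN (bd.c (s + 1) - 1) = (bd.k s : ℤ)) ∧
      (Even (v.ordZ (Matrix.det (upperLeft B (bd.c (s + 1))))) →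
        v.xi (upperLeft B (bd.c (s + 1))) = 0 →
        aN (bd.c (s + 1) - 1) = (bd.k s : ℤ) + 1) ∧
      (v.xi (upperLeft B (bd.c (s + 1))) ≠ 0 → aN (bd.c (s + 1) - 1) = (bd.k s : ℤ) + 2))) ∧
  -- (3)
  (v.DiagBlock B bd s → bd.size s = 2 →
    aN (bd.c (s + 1) - 2) = (bd.k s : ℤ) + 1 ∧ aN (bd.c (s + 1) - 1) = (bd.k s : ℤ) + 1)

/-- `(n₁,…,n_r; m₁,…,m_r; ζ₁,…,ζ_r)` (encoded via cumulative block lengths `Ns`) is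
the extended Gross–Keating datum `EGK(B)` of `B` (Definition 1.5), computed from an
optimal form `B'` equivalent to `B`. -/
def IsEGK {n : ℕ} (B : Matrix (Fin n) (Fin n) F) (r : ℕ) (Ns : ℕ → ℕ) (ms zs : ℕ → ℤ) :
    Prop :=
  ∃ B' : Matrix (Fin n) (Fin n) F, v.Equivalent B B' ∧
    ∃ a : Fin n → ℤ, v.IsGK B' a ∧ v.MemS B' a ∧ BlocksOf a r Ns ms ∧
      ∀ s < r, (Even (Ns (s + 1)) → zs s = v.xi (upperLeft B' (Ns (s + 1)))) ∧
        (¬ Even (Ns (s + 1)) → IsCliffordInv (upperLeft B' (Ns (s + 1))) (zs s))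

end LocalFieldData

/-!
Take `a` constant equal to `m_s` on the `s`-th block and put `ε = ζ_s` at the last position of
every block. At the remaining even positions (N2) decides whether `ε` vanishes, and at the
remaining odd positions (N5) either imposes nothing or, unwound through the block, forces `ε` to
a value `forcedSign s` built from the `ζ` of earlier blocks. Condition (E3) says exactly that
this forced value is `ζ_s` when block `s` ends at such an odd position, and (E2) is (N2) at the
block ends.
-/

theorem Fin.sum_filter_lt_eq_sum_range {M : Type*} [AddCommMonoid M] {n : ℕ} (f : ℕ → M)
    (i : Fin n) : ∑ j ∈ Finset.univ.filter (fun j : Fin n => j < i), f j =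
      ∑ k ∈ Finset.range i, f k := by
  rw [Finset.filter_gt_eq_Iio, ← Nat.Iio_eq_range, ← Fin.map_valEmbedding_Iio, Finset.sum_map]
  rfl

theorem Fin.sum_filter_le_eq_sum_range {M : Type*} [AddCommMonoid M] {n : ℕ} (f : ℕ → M)
    (i : Fin n) : ∑ j ∈ Finset.univ.filter (fun j : Fin n => j ≤ i), f j =
      ∑ k ∈ Finset.range (i + 1), f k := by
  rw [Finset.filter_ge_eq_Iic, Nat.range_succ_eq_Iic, ← Fin.map_valEmbedding_Iic, Finset.sum_map]
  rfl

namespace EGKDatum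

def blockOf (r : ℕ) (Ns : ℕ → ℕ) (i : ℕ) : ℕ := Nat.findGreatest (fun s => Ns s ≤ i) r

section Blocks

variable {r : ℕ} {Ns : ℕ → ℕ} {i s : ℕ}

theorem Ns_le_Ns (hNs : ∀ s < r, Ns s < Ns (s + 1)) {s t : ℕ} (hst : s ≤ t) (ht : t ≤ r) :
    Ns s ≤ Ns t :=
  (strictMonoOn_Iic_of_lt_succ hNs).monotoneOn (Set.mem_Iic.2 (hst.trans ht)) (Set.mem_Iic.2 ht)
    hst

theorem blockOf_le (i : ℕ) : blockOf r Ns i ≤ r := Nat.findGreatest_le r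

theorem Ns_blockOf_le (h0 : Ns 0 = 0) (i : ℕ) : Ns (blockOf r Ns i) ≤ i :=
  Nat.findGreatest_spec (P := fun s => Ns s ≤ i) (Nat.zero_le r) (by rw [h0]; exact Nat.zero_le i)

theorem blockOf_mono (h0 : Ns 0 = 0) {j : ℕ} (hij : i ≤ j) :
    blockOf r Ns i ≤ blockOf r Ns j :=
  Nat.le_findGreatest (blockOf_le i) ((Ns_blockOf_le h0 i).trans hij)

theorem blockOf_lt (h0 : Ns 0 = 0) (hi : i < Ns r) : blockOf r Ns i < r :=
  (blockOf_le i).lt_of_ne fun h => (h ▸ Ns_blockOf_le h0 i).not_gt hi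

theorem lt_Ns_blockOf_add_one (h0 : Ns 0 = 0) (hi : i < Ns r) :
    i < Ns (blockOf r Ns i + 1) :=
  not_le.mp <| Nat.findGreatest_is_greatest (P := fun s => Ns s ≤ i) (Nat.lt_succ_self _)
    (blockOf_lt h0 hi)

theorem blockOf_eq (hNs : ∀ s < r, Ns s < Ns (s + 1)) (hs : s < r) (h1 : Ns s ≤ i)
    (h2 : i < Ns (s + 1)) : blockOf r Ns i = s := by
  refine le_antisymm ?_ (Nat.le_findGreatest hs.le h1)
  by_contra! hlt
  have : Ns (s + 1) ≤ Ns (blockOf r Ns i) := Ns_le_Ns hNs hlt (blockOf_le i)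
  have : Ns (blockOf r Ns i) ≤ i := Nat.findGreatest_spec (P := fun s => Ns s ≤ i) hs.le h1
  omega

end Blocks

def blockValue (r : ℕ) (Ns : ℕ → ℕ) (ms : ℕ → ℤ) (i : ℕ) : ℤ :=
  ms (blockOf r Ns i)

def partialSum (r : ℕ) (Ns : ℕ → ℕ) (ms : ℕ → ℤ) (k : ℕ) : ℤ :=
  ∑ j ∈ Finset.range k, blockValue r Ns ms j

section BlockValue

variable {r : ℕ} {Ns : ℕ → ℕ} {ms : ℕ → ℤ} {i k s : ℕ}

theorem blockValue_eq (hNs : ∀ s < r, Ns s < Ns (s + 1)) (hs : s < r) (h1 : Ns s ≤ i)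
    (h2 : i < Ns (s + 1)) : blockValue r Ns ms i = ms s := by
  rw [blockValue, blockOf_eq hNs hs h1 h2]

theorem partialSum_succ (k : ℕ) :
    partialSum r Ns ms (k + 1) = partialSum r Ns ms k + blockValue r Ns ms k :=
  Finset.sum_range_succ _ _

theorem partialSum_eq_add (hNs : ∀ s < r, Ns s < Ns (s + 1)) (hs : s < r) (h1 : Ns s ≤ k)
    (h2 : k ≤ Ns (s + 1)) :
    partialSum r Ns ms k = partialSum r Ns ms (Ns s) + ((k - Ns s : ℕ) : ℤ) * ms s := by
  rw [partialSum, partialSum, ← Finset.sum_range_add_sum_Ico _ h1,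
    Finset.sum_congr rfl fun j hj => blockValue_eq hNs hs (Finset.mem_Ico.1 hj).1
      ((Finset.mem_Ico.1 hj).2.trans_le h2),
    Finset.sum_const, Nat.card_Ico, nsmul_eq_mul]

theorem partialSum_Ns (h0 : Ns 0 = 0) (hNs : ∀ s < r, Ns s < Ns (s + 1)) (hk : k ≤ r) :
    partialSum r Ns ms (Ns k) = ∑ u ∈ Finset.range k, ms u * ((Ns (u + 1) : ℤ) - Ns u) := by
  induction k with
  | zero => simp [partialSum, h0]
  | succ k ih =>
    rw [partialSum_eq_add hNs hk (hNs k hk).le le_rfl, ih (by omega), Finset.sum_range_succ,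
      Nat.cast_sub (hNs k hk).le]
    ring

theorem blockValue_mono (h0 : Ns 0 = 0) (hms : ∀ s, s + 1 < r → ms s < ms (s + 1))
    {j : ℕ} (hj : j < Ns r) (hij : i ≤ j) : blockValue r Ns ms i ≤ blockValue r Ns ms j := by
  have hj' := blockOf_lt h0 hj
  have hij' := blockOf_mono (r := r) (Ns := Ns) h0 hij
  exact (strictMonoOn_Iic_of_lt_succ (n := r - 1) fun m hm => hms m (by omega)).monotoneOn
    (Set.mem_Iic.2 (by omega)) (Set.mem_Iic.2 (by omega)) hij'

end BlockValue

/-- The value that (N5) forces on the odd positions of the `s`-th block at which the partial sum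
of `a` is even. -/
def forcedSign (Ns : ℕ → ℕ) (ms zs : ℕ → ℤ) : ℕ → ℤ
  | 0 => 1
  | s + 1 => if Even (Ns (s + 1)) then
      forcedSign Ns ms zs s * zs s ^ (ms s + ms (s + 1)).toNat
    else zs s

section ForcedSign

variable {Ns : ℕ → ℕ} {ms zs : ℕ → ℤ}

theorem forcedSign_eq_prod {s : ℕ} (he : ∀ i < s, Even (Ns (i + 1))) :
    forcedSign Ns ms zs s = ∏ u ∈ Finset.range s, zs u ^ (ms u + ms (u + 1)).toNat := by
  induction s with
  | zero => rfl
  | succ s ih =>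
    rw [forcedSign, if_pos (he s s.lt_succ_self), ih fun i hi => he i (by omega),
      Finset.prod_range_succ]

theorem forcedSign_eq_mul_prod {t s : ℕ} (hts : t < s) (ht : ¬ Even (Ns (t + 1)))
    (he : ∀ i, t < i → i < s → Even (Ns (i + 1))) :
    forcedSign Ns ms zs s =
      zs t * ∏ u ∈ Finset.Ico (t + 1) s, zs u ^ (ms u + ms (u + 1)).toNat := by
  induction s with
  | zero => omega
  | succ s ih =>
    rcases (Nat.lt_succ_iff.1 hts).lt_or_eq with hlt | rfl
    · rw [forcedSign, if_pos (he s hlt s.lt_succ_self),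
        ih hlt fun i h1 h2 => he i h1 (by omega), Finset.prod_Ico_succ_top (by omega), mul_assoc]
    · rw [forcedSign, if_neg ht, Finset.Ico_self, Finset.prod_empty, mul_one]

theorem abs_forcedSign_le_one {s : ℕ} (hz : ∀ u < s, |zs u| ≤ 1) :
    |forcedSign Ns ms zs s| ≤ 1 := by
  induction s with
  | zero => simp [forcedSign]
  | succ s ih =>
    rw [forcedSign]
    split_ifs
    · rw [abs_mul, abs_pow]
      exact mul_le_one₀ (ih fun u hu => hz u (by omega)) (by positivity)
        (pow_le_one₀ (abs_nonneg _) (hz s s.lt_succ_self))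
    · exact hz s s.lt_succ_self

end ForcedSign

/-- The sign at position `i` (the paper's index `i + 1`): `zs s` at the last position of the
`s`-th block, elsewhere the value forced by (N2) at even and by (N5) at odd indices. -/
def naiveSign (r : ℕ) (Ns : ℕ → ℕ) (ms zs : ℕ → ℤ) (i : ℕ) : ℤ :=
  if i + 1 = Ns (blockOf r Ns i + 1) then zs (blockOf r Ns i)
  else if Even (i + 1) then if Even (partialSum r Ns ms (i + 1)) then 1 else 0
  else if Even (partialSum r Ns ms i) then forcedSign Ns ms zs (blockOf r Ns i) else 1

section NaiveSign

variable {n r : ℕ} {Ns : ℕ → ℕ} {ms zs : ℕ → ℤ} {i s : ℕ}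

theorem naiveSign_Ns_sub_one (hNs : ∀ s < r, Ns s < Ns (s + 1)) (hs : s < r) :
    naiveSign r Ns ms zs (Ns (s + 1) - 1) = zs s := by
  have := hNs s hs
  rw [naiveSign, blockOf_eq hNs hs (by omega) (by omega), if_pos (by omega)]

theorem naiveSign_of_add_one_lt (hNs : ∀ s < r, Ns s < Ns (s + 1)) (hs : s < r)
    (h1 : Ns s ≤ i) (h2 : i + 1 < Ns (s + 1)) :
    naiveSign r Ns ms zs i =
      if Even (i + 1) then if Even (partialSum r Ns ms (i + 1)) then 1 else 0
      else if Even (partialSum r Ns ms i) then forcedSign Ns ms zs s else 1 := by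
  rw [naiveSign, blockOf_eq hNs hs h1 (by omega), if_neg h2.ne]

theorem zs_eq_forcedSign (hG : IsEGKDatum n r Ns ms zs) (hs : s < r)
    (hodd : ¬ Even (Ns (s + 1))) (hS : Even (partialSum r Ns ms (Ns (s + 1) - 1))) :
    zs s = forcedSign Ns ms zs s := by
  obtain ⟨h0, -, hNs, -, -, -, -, hE3⟩ := hG
  obtain ⟨-, hE3a, hE3b⟩ := hE3 s hs hodd
  by_cases hall : ∀ i < s, Even (Ns (i + 1))
  · rw [hE3a hall, forcedSign_eq_prod hall]
  push Not at hall
  obtain ⟨i, his, hi⟩ := hall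
  set t := Nat.findGreatest (fun i => ¬ Even (Ns (i + 1))) (s - 1)
  have ht : ¬ Even (Ns (t + 1)) :=
    Nat.findGreatest_spec (P := fun i => ¬ Even (Ns (i + 1))) (by omega) hi
  have hts : t < s := (Nat.findGreatest_le (s - 1)).trans_lt (by omega)
  have hmax : ∀ j, t < j → j < s → Even (Ns (j + 1)) := fun j h1 h2 =>
    not_not.1 (Nat.findGreatest_is_greatest (P := fun i => ¬ Even (Ns (i + 1))) h1 (by omega))
  have hlt := hNs s hs
  have hlen : ((Ns (s + 1) - 1 - Ns s : ℕ) : ℤ) = Ns (s + 1) - Ns s - 1 := by omega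
  rw [partialSum_eq_add hNs hs (by omega) (Nat.sub_le _ _), partialSum_Ns h0 hNs hs.le, hlen,
    mul_comm] at hS
  rw [hE3b t hts ht hmax hS, forcedSign_eq_mul_prod hts ht hmax]

theorem naiveSign_eq_forcedSign (hG : IsEGKDatum n r Ns ms zs) (hi : i < n)
    (hodd : ¬ Even (i + 1)) (hS : Even (partialSum r Ns ms i)) :
    naiveSign r Ns ms zs i = forcedSign Ns ms zs (blockOf r Ns i) := by
  obtain ⟨h0, rfl, hNs, -⟩ := id hG
  have hs := blockOf_lt h0 hi
  rcases (Nat.add_one_le_of_lt (lt_Ns_blockOf_add_one h0 hi)).eq_or_lt with hend | hlt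
  · rw [naiveSign, if_pos hend]
    exact zs_eq_forcedSign hG hs (hend ▸ hodd) (by rwa [← hend, Nat.add_sub_cancel])
  · rw [naiveSign_of_add_one_lt hNs hs (Ns_blockOf_le h0 i) hlt, if_neg hodd, if_pos hS]

theorem naiveSign_ne_zero_iff_of_even (hG : IsEGKDatum n r Ns ms zs) (hi : i < n)
    (hev : Even (i + 1)) : naiveSign r Ns ms zs i ≠ 0 ↔ Even (partialSum r Ns ms (i + 1)) := by
  obtain ⟨h0, rfl, hNs, -, -, -, hE2, -⟩ := hG
  have hs := blockOf_lt h0 hi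
  rcases (Nat.add_one_le_of_lt (lt_Ns_blockOf_add_one h0 hi)).eq_or_lt with hend | hlt
  · rw [naiveSign, if_pos hend, hE2 _ hs (hend ▸ hev), hend, partialSum_Ns h0 hNs hs]
  · rw [naiveSign_of_add_one_lt hNs hs (Ns_blockOf_le h0 i) hlt, if_pos hev]
    split_ifs with h <;> simp [h]

theorem naiveSign_zero (hG : IsEGKDatum n r Ns ms zs) (hn : 0 < n) :
    naiveSign r Ns ms zs 0 = 1 := by
  obtain ⟨h0, hNr, hNs, -⟩ := id hG
  have hr : 0 < r := Nat.pos_of_ne_zero fun hr => by rw [hr, h0] at hNr; omega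
  rw [naiveSign_eq_forcedSign hG hn (by decide) (by simp [partialSum]),
    blockOf_eq hNs hr h0.le (by have := hNs 0 hr; omega), forcedSign]

theorem naiveSign_eq_one (hNs : ∀ s < r, Ns s < Ns (s + 1)) (hs : s < r) (h1 : Ns s ≤ i)
    (h2 : i + 1 < Ns (s + 1)) (hev : Even (i + 1)) (hS : Even (partialSum r Ns ms (i + 1))) :
    naiveSign r Ns ms zs i = 1 := by
  rw [naiveSign_of_add_one_lt hNs hs h1 h2, if_pos hev, if_pos hS]

theorem naiveSign_Ns_sub_two (hG : IsEGKDatum n r Ns ms zs) (hs : s < r)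
    (hev : Even (Ns (s + 1))) (hS : Even (partialSum r Ns ms (Ns (s + 1)))) :
    naiveSign r Ns ms zs (Ns (s + 1) - 2) = forcedSign Ns ms zs s := by
  obtain ⟨h0, rfl, hNs, -⟩ := id hG
  have hlt := hNs s hs
  have hle : Ns (s + 1) ≤ Ns r := Ns_le_Ns hNs hs le_rfl
  obtain ⟨k, hk⟩ := hev
  rcases (by omega : Ns s ≤ Ns (s + 1) - 2 ∨ Ns s = Ns (s + 1) - 1) with hin | hlast
  · have hsum := partialSum_eq_add (ms := ms) hNs hs hin (Nat.sub_le _ _)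
    rw [partialSum_eq_add hNs hs (hin.trans (Nat.sub_le _ _)) le_rfl,
      (by omega : Ns (s + 1) - Ns s = Ns (s + 1) - 2 - Ns s + 2), Nat.cast_add, add_mul,
      ← add_assoc, ← hsum] at hS
    rw [naiveSign_eq_forcedSign hG (by omega) (Nat.not_even_iff_odd.2 ⟨k - 1, by omega⟩)
      ((Int.even_add.1 hS).2 (by simp)), blockOf_eq hNs hs hin (by omega)]
  · obtain ⟨t, rfl⟩ := Nat.exists_eq_add_one_of_ne_zero (show s ≠ 0 by rintro rfl; omega)
    have hodd : ¬ Even (Ns (t + 1)) := by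
      rw [hlast]
      exact Nat.not_even_iff_odd.2 ⟨k - 1, by omega⟩
    rw [forcedSign, if_neg hodd,
      ← naiveSign_Ns_sub_one (ms := ms) (zs := zs) hNs (by omega : t < r), hlast, Nat.sub_sub]

theorem naiveSign_add_two (hG : IsEGKDatum n r Ns ms zs) {j : ℕ} (hj : j + 2 < n)
    (hev : Even j) (hS : Even (partialSum r Ns ms (j + 2))) :
    naiveSign r Ns ms zs (j + 2) = naiveSign r Ns ms zs j * naiveSign r Ns ms zs (j + 1) ^
      (blockValue r Ns ms (j + 2) + blockValue r Ns ms (j + 1)).toNat := by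
  obtain ⟨h0, hn, hNs, -⟩ := id hG
  obtain ⟨k, hk⟩ := hev
  have hlo := Ns_blockOf_le (r := r) h0 (j + 2)
  have hhi := lt_Ns_blockOf_add_one h0 (hn ▸ hj)
  have hs := blockOf_lt h0 (hn ▸ hj)
  rw [naiveSign_eq_forcedSign hG hj (Nat.not_even_iff_odd.2 ⟨k + 1, by omega⟩) hS]
  generalize blockOf r Ns (j + 2) = s at hlo hhi hs ⊢
  rcases (by omega : Ns s ≤ j ∨ Ns s = j + 2 ∨ Ns s = j + 1) with hin | hstart | hsecond
  · have hSj : partialSum r Ns ms (j + 2) = partialSum r Ns ms j + 2 * ms s := by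
      rw [partialSum_succ, partialSum_succ, blockValue_eq hNs hs hin (by omega),
        blockValue_eq hNs hs (by omega) (by omega)]
      ring
    have hSj' : Even (partialSum r Ns ms j) := (Int.even_add.1 (hSj ▸ hS)).2 (by simp)
    rw [naiveSign_eq_one hNs hs (by omega) hhi ⟨k + 1, by omega⟩ hS, one_pow, mul_one,
      naiveSign_eq_forcedSign hG (by omega) (Nat.not_even_iff_odd.2 ⟨k, by omega⟩) hSj',
      blockOf_eq hNs hs hin (by omega)]
  · obtain ⟨t, rfl⟩ := Nat.exists_eq_add_one_of_ne_zero (show s ≠ 0 by rintro rfl; omega)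
    have hev : Even (Ns (t + 1)) := ⟨k + 1, by omega⟩
    rw [blockValue_eq hNs hs (by omega) hhi,
      blockValue_eq hNs (by omega : t < r) (by have := hNs t (by omega); omega) (by omega),
      (by omega : j = Ns (t + 1) - 2), (by omega : Ns (t + 1) - 2 + 1 = Ns (t + 1) - 1),
      naiveSign_Ns_sub_two hG (by omega) hev (by rwa [hstart]),
      naiveSign_Ns_sub_one hNs (by omega), forcedSign, if_pos hev, add_comm (ms (t + 1))]
  · obtain ⟨t, rfl⟩ := Nat.exists_eq_add_one_of_ne_zero (show s ≠ 0 by rintro rfl; omega)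
    rw [naiveSign_eq_one hNs hs (by omega) hhi ⟨k + 1, by omega⟩ hS, one_pow, mul_one,
      (by omega : j = Ns (t + 1) - 1), naiveSign_Ns_sub_one hNs (by omega), forcedSign,
      if_neg (Nat.not_even_iff_odd.2 ⟨k, by omega⟩)]

theorem naiveSign_ne_zero_of_not_even (hG : IsEGKDatum n r Ns ms zs) (hi : i < n)
    (hodd : ¬ Even (i + 1)) : naiveSign r Ns ms zs i ≠ 0 := by
  induction i using Nat.strong_induction_on with
  | _ i ih =>
    obtain ⟨h0, hn, hNs, -, -, -, -, hE3⟩ := id hG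
    obtain ⟨k, hk⟩ : Even i := by rwa [Nat.even_add_one, not_not] at hodd
    by_cases hS : Even (partialSum r Ns ms i)
    · rcases (by omega : i = 0 ∨ 2 ≤ i) with rfl | h2
      · rw [naiveSign_zero hG hi]
        exact one_ne_zero
      obtain ⟨j, rfl⟩ : ∃ j, i = j + 2 := ⟨i - 2, by omega⟩
      rw [naiveSign_add_two hG hi ⟨k - 1, by omega⟩ hS]
      exact mul_ne_zero (ih j (by omega) (by omega) (Nat.not_even_iff_odd.2 ⟨k - 1, by omega⟩))
        (pow_ne_zero _ ((naiveSign_ne_zero_iff_of_even hG (by omega) ⟨k, by omega⟩).2 hS))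
    · have hs := blockOf_lt h0 (hn ▸ hi)
      rcases (Nat.add_one_le_of_lt (lt_Ns_blockOf_add_one h0 (hn ▸ hi))).eq_or_lt with hend | hlt
      · rw [naiveSign, if_pos hend]
        exact (hE3 _ hs (hend ▸ hodd)).1
      · rw [naiveSign_of_add_one_lt hNs hs (Ns_blockOf_le h0 i) hlt, if_neg hodd, if_neg hS]
        exact one_ne_zero

theorem abs_naiveSign_le_one (h0 : Ns 0 = 0) (hz : ∀ s < r, |zs s| ≤ 1) (hi : i < Ns r) :
    |naiveSign r Ns ms zs i| ≤ 1 := by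
  have hs := blockOf_lt h0 hi
  rw [naiveSign]
  split_ifs
  all_goals first
    | exact hz _ hs
    | exact abs_forcedSign_le_one fun u hu => hz u (hu.trans hs)
    | simp

end NaiveSign

end EGKDatum

open EGKDatum

/-- **Proposition 4.2.** The map `Υ` from naive EGK data of length `n` to EGK data of
length `n` is surjective. -/
theorem upsilon_surjective (n r : ℕ) (Ns : ℕ → ℕ) (ms zs : ℕ → ℤ)
    (h : IsEGKDatum n r Ns ms zs) :
    ∃ a ε : Fin n → ℤ, IsNaiveEGK n a ε ∧ UpsilonRel n a ε r Ns ms zs := by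
  obtain ⟨h0, rfl, hNs, hm0, hms, hz, -⟩ := id h
  refine ⟨fun i => blockValue r Ns ms i, fun i => naiveSign r Ns ms zs i,
    ⟨fun i => hm0 _ (blockOf_lt h0 i.isLt), fun i j hij => blockValue_mono h0 hms j.isLt hij,
      fun i => Int.abs_le_one_iff.1 <|
        abs_naiveSign_le_one h0 (fun s hs => Int.abs_le_one_iff.2 (hz s hs)) i.isLt,
      fun i hev => ?_, fun i hodd => naiveSign_ne_zero_of_not_even h i.isLt hodd,
      fun hn => naiveSign_zero h hn, fun i h2 hodd hS _ _ => ?_⟩,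
    ⟨h0, rfl, hNs, fun s hs i h1 h2 => blockValue_eq hNs hs h1 h2, hms⟩,
    fun s hs _ => (naiveSign_Ns_sub_one hNs hs).symm⟩
  · rw [Fin.sum_filter_le_eq_sum_range]
    exact naiveSign_ne_zero_iff_of_even h i.isLt hev
  · obtain ⟨j, hj⟩ : ∃ j, (i : ℕ) = j + 2 := ⟨i - 2, by omega⟩
    rw [Fin.sum_filter_lt_eq_sum_range, hj] at hS
    show naiveSign r Ns ms zs i = naiveSign r Ns ms zs (i - 2) * naiveSign r Ns ms zs (i - 1) ^
      (blockValue r Ns ms i + blockValue r Ns ms (i - 1)).toNat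
    rw [hj] at hodd ⊢
    exact naiveSign_add_two h (hj ▸ i.isLt) (by simpa [Nat.even_add_one] using hodd) hS

end
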